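/- Let Ψ be Pareto distributed with shape α > 2 and scale v = ((α−1)/α)·rn, r, n > 0, and let i, p > 0, g ≥ 0. Then B(c) = rn·(g+p) − p·c + (i+p)·∫_v^c (c − ψ)·α·vᵃ/ψ^{α+1} dψ, for c ≥ v, equals (g − i)·rn + (i + p)·((α−1)^{α−1}/αᵃ)·(rn)ᵃ·c^{1−α} + i·c, and is minimized over c ≥ v at c* = ((i+p)/i)^{1/α}·((α−1)/α)·rn with minimum value [g − i + i·((i+p)/i)^{1/α}]·rn. -/

import Mathlib

/-!
With `v = (α - 1) / α · rn`, the Pareto integral is elementary and `α v / (α - 1) = rn`, so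
`B(c) = (g - i)·rn + K·c^(1-α) + i·c` with `K = (i + p) v^α / (α - 1)`. Writing
`c* = ((i + p) / i)^(1/α)·v`, one has `K = i c*^α / (α - 1)`, and the minimality of `c*` becomes
`α c* ≤ c*^α c^(1-α) + (α - 1) c`, which is Bernoulli's inequality for `(c* / c)^α`.
-/

open Real intervalIntegral

theorem le_rpow_mul_rpow_one_sub_add {α x y : ℝ} (hα : 1 ≤ α) (hx : 0 ≤ x) (hy : 0 < y) :
    α * x ≤ x ^ α * y ^ (1 - α) + (α - 1) * y := by
  have hbern := one_add_mul_self_le_rpow_one_add (s := x / y - 1)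
    (by linarith [div_nonneg hx hy.le]) hα
  rw [add_sub_cancel, div_rpow hx hy.le] at hbern
  have hscaled := mul_le_mul_of_nonneg_left hbern hy.le
  rw [rpow_sub hy, rpow_one]
  field_simp at hscaled ⊢
  nlinarith [rpow_pos_of_pos hy α]

theorem mul_div_le_rpow_one_sub_add {α k x y : ℝ} (hα : 1 < α) (hk : 0 ≤ k) (hx : 0 < x)
    (hy : 0 < y) : k * α * x / (α - 1) ≤ k * x ^ α / (α - 1) * y ^ (1 - α) + k * y := by
  have hα1 : 0 < α - 1 := by linarith
  have key := mul_le_mul_of_nonneg_left (le_rpow_mul_rpow_one_sub_add hα.le hx.le hy) hk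
  rw [div_le_iff₀ hα1]
  field_simp
  linarith

theorem mul_rpow_div_mul_rpow_one_sub_add_self {α k x : ℝ} (hα : 1 < α) (hx : 0 < x) :
    k * x ^ α / (α - 1) * x ^ (1 - α) + k * x = k * α * x / (α - 1) := by
  have : α - 1 ≠ 0 := by linarith
  rw [div_mul_eq_mul_div, mul_assoc, ← rpow_add hx, add_sub_cancel, rpow_one]
  field_simp
  ring

theorem integral_sub_mul_pareto_density {α v c : ℝ} (hα : 1 < α) (hv : 0 < v) (hvc : v ≤ c) :
    ∫ ψ in v..c, (c - ψ) * (α * v ^ α / ψ ^ (α + 1)) =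
      c + v ^ α * c ^ (1 - α) / (α - 1) - α * v / (α - 1) := by
  have hc : 0 < c := hv.trans_le hvc
  have h0 : (0 : ℝ) ∉ Set.uIcc v c := by
    rw [Set.uIcc_of_le hvc]
    exact fun h => hv.not_ge h.1
  have hsplit : Set.EqOn (fun ψ => (c - ψ) * (α * v ^ α / ψ ^ (α + 1)))
      (fun ψ => α * v ^ α * (c * ψ ^ (-α - 1) - ψ ^ (-α))) (Set.uIcc v c) := by
    intro ψ hψ
    have hψ : 0 < ψ := by
      rw [Set.uIcc_of_le hvc] at hψ
      exact hv.trans_le hψ.1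
    dsimp only
    rw [rpow_sub hψ, rpow_neg hψ.le, rpow_add hψ, rpow_one]
    field_simp
  have hint (s : ℝ) : IntervalIntegrable (fun ψ : ℝ => ψ ^ s) MeasureTheory.volume v c :=
    intervalIntegrable_rpow (Or.inr h0)
  rw [integral_congr hsplit, integral_const_mul, integral_sub ((hint _).const_mul c) (hint _),
    integral_const_mul, integral_rpow (Or.inr ⟨by linarith, h0⟩),
    integral_rpow (Or.inr ⟨by linarith, h0⟩), show -α - 1 + 1 = -α by ring,
    show -α + 1 = 1 - α by ring, rpow_neg hc.le, rpow_neg hv.le, rpow_sub hc, rpow_sub hv,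
    rpow_one, rpow_one]
  have : α - 1 ≠ 0 := by linarith
  have : 1 - α ≠ 0 := by linarith
  have := rpow_pos_of_pos hc α
  have := rpow_pos_of_pos hv α
  field_simp
  ring

theorem rpow_pareto_scale_div {α m : ℝ} (hα : 1 < α) (hm : 0 ≤ m) :
    ((α - 1) / α * m) ^ α / (α - 1) = (α - 1) ^ (α - 1) / α ^ α * m ^ α := by
  have hα1 : 0 < α - 1 := by linarith
  rw [mul_rpow (by positivity) hm, div_rpow hα1.le (by linarith), rpow_sub hα1, rpow_one]
  field_simp

theorem pareto_mean_of_scale {α m : ℝ} (hα : 1 < α) : α * ((α - 1) / α * m) / (α - 1) = m := by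
  have : α - 1 ≠ 0 := by linarith
  have : α ≠ 0 := by linarith
  field_simp

theorem pareto_billing_cost_eq {α m g i p c : ℝ} (hα : 1 < α) (hm : 0 < m)
    (hc : (α - 1) / α * m ≤ c) :
    m * (g + p) - p * c + (i + p) * ∫ ψ in ((α - 1) / α * m)..c,
        (c - ψ) * (α * ((α - 1) / α * m) ^ α / ψ ^ (α + 1)) =
      (g - i) * m + (i + p) * ((α - 1) ^ (α - 1) / α ^ α) * m ^ α * c ^ (1 - α) + i * c := by
  have hv : 0 < (α - 1) / α * m := mul_pos (div_pos (by linarith) (by linarith)) hm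
  rw [integral_sub_mul_pareto_density hα hv hc, pareto_mean_of_scale hα, mul_div_right_comm,
    rpow_pareto_scale_div hα hm.le]
  ring

theorem pareto_billing_cost_general (α r n g i p : ℝ) (hα : 2 < α) (hr : 0 < r) (hn : 0 < n)
    (hi : 0 < i) (hp : 0 < p)
    (B : ℝ → ℝ)
    (hB : ∀ c, B c = r * n * (g + p) - p * c +
        (i + p) * ∫ ψ in (((α - 1) / α) * (r * n))..c,
          (c - ψ) * (α * (((α - 1) / α) * (r * n)) ^ α / ψ ^ (α + 1))) :
    (∀ c, ((α - 1) / α) * (r * n) ≤ c →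
        B c = (g - i) * (r * n) +
          (i + p) * ((α - 1) ^ (α - 1) / α ^ α) * (r * n) ^ α * c ^ (1 - α) + i * c) ∧
      ((α - 1) / α) * (r * n) ≤ ((i + p) / i) ^ (1 / α) * ((α - 1) / α) * (r * n) ∧
      (∀ c, ((α - 1) / α) * (r * n) ≤ c →
        B (((i + p) / i) ^ (1 / α) * ((α - 1) / α) * (r * n)) ≤ B c) ∧
      B (((i + p) / i) ^ (1 / α) * ((α - 1) / α) * (r * n)) =
        (g - i + i * ((i + p) / i) ^ (1 / α)) * (r * n) := by
  have hα1 : 1 < α := by linarith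
  have hm : 0 < r * n := mul_pos hr hn
  have hclosed (c : ℝ) (hc : (α - 1) / α * (r * n) ≤ c) :=
    (hB c).trans (pareto_billing_cost_eq hα1 hm hc)
  set v := (α - 1) / α * (r * n)
  set q := ((i + p) / i) ^ (1 / α) with hq_def
  have hv : 0 < v := mul_pos (div_pos (by linarith) (by linarith)) hm
  have hq : 1 ≤ q := one_le_rpow ((one_le_div hi).2 (by linarith)) (by positivity)
  have hx : 0 < q * v := by positivity
  have hstar : q * ((α - 1) / α) * (r * n) = q * v := by ring
  have hscale : v ^ α / (α - 1) = (α - 1) ^ (α - 1) / α ^ α * (r * n) ^ α :=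
    rpow_pareto_scale_div hα1 hm.le
  have hcoef : (i + p) * ((α - 1) ^ (α - 1) / α ^ α) * (r * n) ^ α =
      i * (q * v) ^ α / (α - 1) := by
    rw [mul_rpow (by positivity) hv.le, hq_def, ← rpow_mul (by positivity), one_div,
      inv_mul_cancel₀ (by positivity), rpow_one, mul_assoc, ← hscale]
    field_simp
  have hmin : B (q * v) = (g - i) * (r * n) + i * α * (q * v) / (α - 1) := by
    rw [hclosed _ (le_mul_of_one_le_left hv.le hq), hcoef, add_assoc,
      mul_rpow_div_mul_rpow_one_sub_add_self hα1 hx]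
  refine ⟨hclosed, ?_, fun c hc => ?_, ?_⟩
  · rw [hstar]
    exact le_mul_of_one_le_left hv.le hq
  · rw [hstar, hmin, hclosed c hc, hcoef]
    linarith [mul_div_le_rpow_one_sub_add hα1 hi.le hx (hv.trans_le hc)]
  · rw [hstar, hmin, show i * α * (q * v) / (α - 1) = i * q * (α * v / (α - 1)) by ring,
      pareto_mean_of_scale hα1]
    ring

/-- Billing cost for Pareto-distributed aggregate query volume with shape α > 2,
scale v = ((α−1)/α)·rn: for c ≥ v,
B(c) = rn·(g+p) − p·c + (i+p)·∫_v^c (c−ψ)·α·vᵃ/ψ^{α+1} dψ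
     = (g−i)·rn + (i+p)·((α−1)^{α−1}/αᵃ)·(rn)ᵃ·c^{1−α} + i·c,
minimized over c ≥ v at c* = ((i+p)/i)^{1/α}·((α−1)/α)·rn with minimum value
[g − i + i·((i+p)/i)^{1/α}]·rn. -/
theorem pareto_billing_cost (α r n g i p : ℝ) (hα : 2 < α) (hr : 0 < r) (hn : 0 < n)
    (hg : 0 ≤ g) (hi : 0 < i) (hp : 0 < p)
    (B : ℝ → ℝ)
    (hB : ∀ c, B c = r * n * (g + p) - p * c +
        (i + p) * ∫ ψ in (((α - 1) / α) * (r * n))..c,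
          (c - ψ) * (α * (((α - 1) / α) * (r * n)) ^ α / ψ ^ (α + 1))) :
    (∀ c, ((α - 1) / α) * (r * n) ≤ c →
        B c = (g - i) * (r * n) +
          (i + p) * ((α - 1) ^ (α - 1) / α ^ α) * (r * n) ^ α * c ^ (1 - α) + i * c) ∧
      ((α - 1) / α) * (r * n) ≤ ((i + p) / i) ^ (1 / α) * ((α - 1) / α) * (r * n) ∧
      (∀ c, ((α - 1) / α) * (r * n) ≤ c →
        B (((i + p) / i) ^ (1 / α) * ((α - 1) / α) * (r * n)) ≤ B c) ∧
      B (((i + p) / i) ^ (1 / α) * ((α - 1) / α) * (r * n)) =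
        (g - i + i * ((i + p) / i) ^ (1 / α)) * (r * n) :=
  pareto_billing_cost_general α r n g i p hα hr hn hi hp B hB
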